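/- For PathNim PN(3,2) (three stacks on a path; a move removes at least one token total from stacks {1,2} or from stacks {2,3}), the set of P-positions is exactly {(a, 0, a) : a ≥ 0}. -/

import Mathlib

/-!
A set of positions that no move stays inside and that every other position can move into is,
since every move lowers the total number of tokens, exactly the set of P-positions.
For PN(3,2) the positions (a, 0, a) form such a set: a move on {0, 1} fixes the last stack and a
move on {1, 2} fixes the first, so from (a, 0, a) it cannot reach another (b, 0, b); and from any
other position one move on the pair containing the larger outer stack empties the middle stack
and lowers that outer stack to min(p₀, p₂).
-/

/-- A legal move in SetNim: at least one stack strictly decreases, all changed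
stacks lie in some allowed move set, stacks weakly decrease. -/
def Move {V : Type} (A : Set (Set V)) (p q : V → ℕ) : Prop :=
  q ≠ p ∧ (∀ i, q i ≤ p i) ∧ ∃ a ∈ A, ∀ i, q i ≠ p i → i ∈ a

/-- P-positions: positions all of whose options are N-positions. -/
def PPos {V : Type} [Fintype V] (A : Set (Set V)) (p : V → ℕ) : Prop :=
  ∀ q, Move A p q → ¬ PPos A q
termination_by Finset.univ.sum p
decreasing_by
  rename_i hq
  obtain ⟨hne, hle, -⟩ := hq
  refine Finset.sum_lt_sum (fun i _ => hle i) ?_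
  obtain ⟨i, hi⟩ := Function.ne_iff.mp hne
  exact ⟨i, Finset.mem_univ i, lt_of_le_of_ne (hle i) hi⟩

/-- Move sets of PathNim PN(3,2). -/
def PN32 : Set (Set (Fin 3)) := {{0, 1}, {1, 2}}

/-- A kernel, in the sense of von Neumann and Morgenstern, of the move graph. -/
structure IsKernel {V : Type} (A : Set (Set V)) (S : Set (V → ℕ)) : Prop where
  independent : ∀ ⦃p q⦄, p ∈ S → Move A p q → q ∉ S
  absorbing : ∀ p, p ∉ S → ∃ q, Move A p q ∧ q ∈ S

section General

variable {V : Type} [Fintype V] {A : Set (Set V)}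

theorem Move.sum_lt {p q : V → ℕ} (h : Move A p q) : ∑ i, q i < ∑ i, p i := by
  obtain ⟨hne, hle, -⟩ := h
  obtain ⟨i, hi⟩ := Function.ne_iff.mp hne
  exact Finset.sum_lt_sum (fun i _ => hle i) ⟨i, Finset.mem_univ i, (hle i).lt_of_ne hi⟩

theorem pPos_iff_forall_move {p : V → ℕ} : PPos A p ↔ ∀ q, Move A p q → ¬ PPos A q := by
  rw [PPos]

theorem pPos_iff_mem_of_isKernel {S : Set (V → ℕ)} (hS : IsKernel A S) (p : V → ℕ) :
    PPos A p ↔ p ∈ S := by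
  induction hn : ∑ i, p i using Nat.strong_induction_on generalizing p with
  | _ n ih =>
  have ih_move : ∀ q, Move A p q → (PPos A q ↔ q ∈ S) :=
    fun q hq => ih _ (hn ▸ hq.sum_lt) q rfl
  rw [pPos_iff_forall_move]
  constructor
  · intro hP
    by_contra hp
    obtain ⟨q, hq, hqS⟩ := hS.absorbing p hp
    exact hP q hq ((ih_move q hq).2 hqS)
  · intro hp q hq hPq
    exact hS.independent hp hq ((ih_move q hq).1 hPq)

end General

theorem move_pn32_iff {p q : Fin 3 → ℕ} :
    Move PN32 p q ↔ q ≠ p ∧ q ≤ p ∧ (q 2 = p 2 ∨ q 0 = p 0) := by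
  have h01 : (∀ i, q i ≠ p i → i = 0 ∨ i = 1) ↔ q 2 = p 2 := by
    refine ⟨fun h => by_contra fun h2 => by simpa using h 2 h2, fun h i hi => ?_⟩
    fin_cases i <;> simp_all
  have h12 : (∀ i, q i ≠ p i → i = 1 ∨ i = 2) ↔ q 0 = p 0 := by
    refine ⟨fun h => by_contra fun h0 => by simpa using h 0 h0, fun h i hi => ?_⟩
    fin_cases i <;> simp_all
  simp only [Move, PN32, Set.mem_insert_iff, Set.mem_singleton_iff, exists_eq_or_imp,
    exists_eq_left, h01, h12, Pi.le_def]

theorem isKernel_pn32 : IsKernel PN32 {p | ∃ a : ℕ, p = ![a, 0, a]} where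
  independent := by
    rintro _ _ ⟨a, rfl⟩ hmove ⟨b, rfl⟩
    obtain ⟨hne, -, hfixed⟩ := move_pn32_iff.1 hmove
    obtain rfl : b = a := by simpa using hfixed
    exact hne rfl
  absorbing p hp := by
    set m := min (p 0) (p 2)
    refine ⟨![m, 0, m], move_pn32_iff.2 ⟨fun h => hp ⟨m, h.symm⟩, ?_, ?_⟩, m, rfl⟩
    · intro i
      fin_cases i <;> simp [m]
    · rcases min_choice (p 0) (p 2) with h | h <;> simp [m, h]

/-- the P-positions of PN(3,2) are exactly the positions (a,0,a). -/
theorem pn32_ppos (p : Fin 3 → ℕ) :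
    PPos PN32 p ↔ ∃ a : ℕ, p = ![a, 0, a] :=
  pPos_iff_mem_of_isKernel isKernel_pn32 p
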